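/- arXiv:2007.11873 — 3 statements merged into one kernel-verified Lean document; each statement's English description precedes it below -/
import Mathlib

section
/- For integers r, m ≥ 0 and complex w with w, w+1, …, w+m nonzero, ((-1)^r/r!) d^r/dw^r (1/(w)_{m+1}) = (1/(w)_{m+1}) Σ_{0≤m₁≤⋯≤m_r≤m} Π_{i=1}^r 1/(mᵢ+w). -/
open scoped BigOperators

/-!
Write `u_j(z) = (j + z)⁻¹`, so that `1 / (z)_{m+1} = ∏_{j ≤ m} u_j(z)`. Each factor satisfies
`u_j^{(n)} = (-1)^n n! u_j^{n+1}`, and the Leibniz rule for the product then gives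
`((-1)^r / r!) (∏_j u_j)^{(r)} = ∑_{k_0 + ⋯ + k_m = r} ∏_j u_j^{k_j + 1}`. Pulling out `∏_j u_j`
leaves the complete homogeneous symmetric polynomial `h_r(u_0, …, u_m)`, written with exponent
vectors `k`; these are the multiplicities of the multisets of size `r` in `{0, …, m}`, which
correspond in turn to the weakly increasing `r`-tuples by sorting.
-/

open Finset
open scoped Nat

section Combinatorics

variable {α : Type*} [LinearOrder α] {r : ℕ}

def Sym.sortedTuple (S : Sym α r) : Fin r → α :=
  fun i => (S.1.sort)[i.1]'(by rw [Multiset.length_sort, S.2]; exact i.2)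

theorem Sym.ofFn_sortedTuple (S : Sym α r) : List.ofFn S.sortedTuple = S.1.sort := by
  apply List.ext_getElem <;> simp [Sym.sortedTuple]

theorem Sym.monotone_sortedTuple (S : Sym α r) : Monotone S.sortedTuple := by
  rw [← List.sortedLE_ofFn_iff, Sym.ofFn_sortedTuple]
  exact (Multiset.pairwise_sort S.1 _).sortedLE

theorem sum_monotone_eq_sum_sym {M : Type*} [AddCommMonoid M] (s : Finset α)
    (g : Multiset α → M) :
    ∑ t ∈ (Fintype.piFinset fun _ : Fin r => s) with Monotone t, g (List.ofFn t) =
      ∑ S ∈ s.sym r, g S := by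
  refine sum_bij' (fun t _ => Sym.mk (List.ofFn t) (by rw [Multiset.coe_card, List.length_ofFn]))
    (fun S _ => S.sortedTuple) ?_ ?_ ?_ ?_ fun _ _ => rfl
  · intro t ht
    rw [mem_filter, Fintype.mem_piFinset] at ht
    simpa [mem_sym_iff] using ht.1
  · intro S hS
    rw [mem_filter, Fintype.mem_piFinset]
    exact ⟨fun i => mem_sym_iff.1 hS _ ((Multiset.mem_sort _).1 (List.getElem_mem _)),
      S.monotone_sortedTuple⟩
  · intro t ht
    have hsort : Multiset.sort (List.ofFn t : Multiset α) = List.ofFn t := by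
      rw [Multiset.coe_sort, List.mergeSort_eq_self]
      exact (mem_filter.1 ht).2.sortedLE_ofFn.pairwise
    ext i
    simp [Sym.sortedTuple, hsort]
  · intro S _
    ext1
    exact (congrArg _ S.ofFn_sortedTuple).trans (Multiset.sort_eq _ _)

end Combinatorics

theorem sum_sym_prod_eq_sum_piAntidiag {α R : Type*} [DecidableEq α] [CommSemiring R]
    (s : Finset α) (r : ℕ) (x : α → R) :
    ∑ S ∈ s.sym r, ((S : Multiset α).map x).prod = ∑ k ∈ piAntidiag s r, ∏ j ∈ s, x j ^ k j := by
  rw [← map_sym_eq_piAntidiag, sum_map]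
  refine sum_congr rfl fun S hS => ?_
  rw [prod_multiset_map_count]
  refine prod_subset (fun j hj => mem_sym_iff.1 hS j (Multiset.mem_toFinset.1 hj)) fun j _ hj => ?_
  simp [Multiset.count_eq_zero.2 (mt Multiset.mem_toFinset.2 hj)]

theorem sum_monotone_prod_eq_sum_piAntidiag {α R : Type*} [LinearOrder α] [CommSemiring R]
    (s : Finset α) (r : ℕ) (x : α → R) :
    ∑ t ∈ (Fintype.piFinset fun _ : Fin r => s) with Monotone t, ∏ i, x (t i) =
      ∑ k ∈ piAntidiag s r, ∏ j ∈ s, x j ^ k j := by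
  rw [← sum_sym_prod_eq_sum_piAntidiag, ← sum_monotone_eq_sum_sym s fun S => (S.map x).prod]
  simp [List.prod_ofFn]

theorem ascPochhammer_eval_eq_prod_range {R : Type*} [CommSemiring R] (n : ℕ) (x : R) :
    (ascPochhammer R n).eval x = ∏ j ∈ range n, ((j : R) + x) := by
  induction n with
  | zero => simp
  | succ n ih => rw [ascPochhammer_succ_eval, ih, prod_range_succ, add_comm x]

section Derivatives

variable {𝕜 : Type*} [NontriviallyNormedField 𝕜]

theorem iteratedDeriv_inv_const_add (k : ℕ) (a z : 𝕜) :
    iteratedDeriv k (fun z => (a + z)⁻¹) z = (-1) ^ k * k ! * (a + z)⁻¹ ^ (k + 1) := by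
  rw [iteratedDeriv_comp_const_add k Inv.inv a, iteratedDeriv_eq_iterate]
  dsimp only
  rw [iter_deriv_inv, show (-1 - k : ℤ) = -((k + 1 : ℕ) : ℤ) by push_cast; ring, zpow_neg,
    zpow_natCast, inv_pow]

theorem iteratedDeriv_prod_inv_const_add {ι : Type*} [DecidableEq ι] (s : Finset ι) (a : ι → 𝕜)
    (r : ℕ) {z : 𝕜} (hz : ∀ i ∈ s, a i + z ≠ 0) :
    iteratedDeriv r (fun z => ∏ i ∈ s, (a i + z)⁻¹) z =
      (-1) ^ r * r ! * ∑ k ∈ piAntidiag s r, ∏ i ∈ s, (a i + z)⁻¹ ^ (k i + 1) := by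
  induction s using Finset.cons_induction generalizing r with
  | empty => cases r <;> simp [iteratedDeriv_const]
  | cons i s hi ih =>
    have hzs : ∀ j ∈ s, a j + z ≠ 0 := fun j hj => hz j (mem_cons_of_mem hj)
    have hsmooth : ContDiffAt 𝕜 r (fun z => ∏ j ∈ s, (a j + z)⁻¹) z :=
      contDiffAt_prod fun j hj => (contDiffAt_const.add contDiffAt_id).inv (hzs j hj)
    have hi_smooth : ContDiffAt 𝕜 r (fun z => (a i + z)⁻¹) z :=
      (contDiffAt_const.add contDiffAt_id).inv (hz i (mem_cons_self i s))
    have hshift : ∀ p q, ∑ k ∈ piAntidiag s q,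
        (a i + z)⁻¹ ^ ((k + fun t => if t = i then p else 0) i + 1) *
          ∏ j ∈ s, (a j + z)⁻¹ ^ ((k + fun t => if t = i then p else 0) j + 1) =
        (a i + z)⁻¹ ^ (p + 1) * ∑ k ∈ piAntidiag s q, ∏ j ∈ s, (a j + z)⁻¹ ^ (k j + 1) := by
      intro p q
      rw [mul_sum]
      refine sum_congr rfl fun k hk => ?_
      have hki : k i = 0 := by
        by_contra h
        exact hi ((mem_piAntidiag.1 hk).2 i h)
      congr 1
      · simp [hki]
      · exact prod_congr rfl fun j hj => by simp [ne_of_mem_of_not_mem hj hi]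
    simp_rw [prod_cons]
    rw [iteratedDeriv_fun_mul hi_smooth hsmooth, piAntidiag_cons, sum_disjiUnion]
    simp_rw [sum_map, addRightEmbedding_apply, hshift]
    rw [Nat.sum_antidiagonal_eq_sum_range_succ
      (fun p q => (a i + z)⁻¹ ^ (p + 1) * ∑ k ∈ piAntidiag s q, ∏ j ∈ s, (a j + z)⁻¹ ^ (k j + 1)),
      mul_sum]
    refine sum_congr rfl fun p hp => ?_
    have hpr : p ≤ r := Nat.lt_succ_iff.1 (mem_range.1 hp)
    rw [iteratedDeriv_inv_const_add, ih _ hzs, ← Nat.choose_mul_factorial_mul_factorial hpr,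
      show (-1 : 𝕜) ^ r = (-1) ^ p * (-1) ^ (r - p) by rw [← pow_add, Nat.add_sub_cancel' hpr]]
    push_cast
    ring

end Derivatives

theorem tsum_ite_monotone_le_eq_sum {M : Type*} [AddCommMonoid M] [TopologicalSpace M]
    (r m : ℕ) (f : (Fin r → ℕ) → M) :
    ∑' t : Fin r → ℕ, (if Monotone t ∧ ∀ i, t i ≤ m then f t else 0) =
      ∑ t ∈ (Fintype.piFinset fun _ : Fin r => range (m + 1)) with Monotone t, f t := by
  rw [sum_filter, tsum_eq_sum (s := Fintype.piFinset fun _ : Fin r => range (m + 1))]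
  · exact sum_congr rfl fun t ht => by simp_all
  · intro t ht
    simp_all

theorem stmt8 (r m : ℕ) (w : ℂ) (hw : ∀ j : ℕ, j ≤ m → w + j ≠ 0) :
    ((-1 : ℂ) ^ r / (Nat.factorial r : ℂ)) *
      iteratedDeriv r (fun z : ℂ => 1 / (ascPochhammer ℂ (m + 1)).eval z) w
    = (1 / (ascPochhammer ℂ (m + 1)).eval w) *
        ∑' t : Fin r → ℕ, if Monotone t ∧ ∀ i, t i ≤ m then
          ∏ i, (1 : ℂ) / ((t i : ℂ) + w) else 0 := by
  have hwj : ∀ j ∈ range (m + 1), (j : ℂ) + w ≠ 0 := fun j hj =>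
    add_comm w j ▸ hw j (Nat.lt_succ_iff.1 (mem_range.1 hj))
  have hsign : (-1 : ℂ) ^ r / r ! * ((-1) ^ r * r !) = 1 := by
    have hfact : (r ! : ℂ) ≠ 0 := by exact_mod_cast r.factorial_ne_zero
    field_simp
    rw [← pow_mul, pow_mul', neg_one_sq, one_pow]
  simp_rw [one_div, ascPochhammer_eval_eq_prod_range, ← prod_inv_distrib]
  rw [tsum_ite_monotone_le_eq_sum,
    sum_monotone_prod_eq_sum_piAntidiag _ _ fun j : ℕ => ((j : ℂ) + w)⁻¹,
    iteratedDeriv_prod_inv_const_add _ _ _ hwj, ← mul_assoc, hsign, one_mul, mul_sum]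
  refine sum_congr rfl fun k _ => ?_
  rw [← prod_mul_distrib]
  simp_rw [pow_succ']
end

section
/- For all integers s ≥ 1 and t ≥ 2, Σ_{i=0}^{s-1} ζ(2i+t) ζ*({2}^{s-1-i}) = Σ_{i=1}^{s} ζ*({2}^{i-1}, t, {2}^{s-i}), where ζ(0) is interpreted as -1/2 and ζ*(∅) = 1. -/
open scoped BigOperators

/-- Multiple zeta-star value ζ*, encoded with mᵢ = m i + 1. -/
noncomputable def zetaStar {n : ℕ} (k : Fin n → ℕ) : ℝ :=
  ∑' m : Fin n → ℕ, if Monotone m then ∏ i, (1 : ℝ) / ((m i + 1 : ℝ) ^ (k i)) else 0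

/-!
Everything is computed in `ℝ≥0∞`, where sums may be rearranged freely; the real identity follows
because the left-hand side is finite.

Let `x m = (m + 1)⁻²`. Summing first over the position `m` of the entry `t`, the `i`-th term on
the right is `∑ₘ Hᵢ(m) (m + 1)^(-t) h_{s-1-i}(m)`, where `Hᵢ(m)` sums `x m₁ ⋯ x mᵢ` over
`m₁ ≤ ⋯ ≤ mᵢ ≤ m` and `h_c(m)` sums `x m₁ ⋯ x m_c` over `m ≤ m₁ ≤ ⋯ ≤ m_c`; on the left,
`ζ(2i + t) ζ*({2}^(s-1-i)) = ∑ₘ x(m)ⁱ (m + 1)^(-t) h_{s-1-i}(0)`. So it suffices that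
`∑ᵢ Hᵢ(m) h_{s-1-i}(m) = ∑ᵢ x(m)ⁱ h_{s-1-i}(0)` for every `m`: both sides count each monotone
`(s - 1)`-tuple with exactly `j` entries equal to `m` precisely `j + 1` times.
-/

open scoped ENNReal
open Finset

namespace MultipleZetaStar

-- `homSumFrom x c n = ∑_{n ≤ m₁ ≤ ⋯ ≤ m_c} x m₁ ⋯ x m_c`; this is `h_c(n)` above, and `Hᵢ(m)` is
-- `homSumFrom ((Set.Iic m).indicator x) i 0`.
noncomputable def homSumFrom (x : ℕ → ℝ≥0∞) : ℕ → ℕ → ℝ≥0∞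
  | 0, _ => 1
  | c + 1, n => ∑' m, if n ≤ m then x m * homSumFrom x c m else 0

section homSumFrom

variable {x y z : ℕ → ℝ≥0∞}

@[simp] lemma homSumFrom_zero (x : ℕ → ℝ≥0∞) (n : ℕ) : homSumFrom x 0 n = 1 := rfl

lemma homSumFrom_succ (x : ℕ → ℝ≥0∞) (c n : ℕ) :
    homSumFrom x (c + 1) n = ∑' m, if n ≤ m then x m * homSumFrom x c m else 0 := rfl

lemma homSumFrom_le_pow_tsum (x : ℕ → ℝ≥0∞) (c n : ℕ) : homSumFrom x c n ≤ (∑' m, x m) ^ c := by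
  induction c generalizing n with
  | zero => simp
  | succ c ih =>
    calc homSumFrom x (c + 1) n ≤ ∑' m, x m * (∑' m, x m) ^ c := by
          refine ENNReal.tsum_le_tsum fun m => ?_
          split_ifs
          · gcongr; exact ih m
          · exact zero_le
      _ = (∑' m, x m) ^ (c + 1) := by rw [ENNReal.tsum_mul_right, pow_succ']

lemma homSumFrom_ne_top (hx : ∑' m, x m ≠ ⊤) (c n : ℕ) : homSumFrom x c n ≠ ⊤ :=
  ne_top_of_le_ne_top (ENNReal.pow_ne_top hx) (homSumFrom_le_pow_tsum x c n)

lemma homSumFrom_congr {n : ℕ} (h : ∀ v, n ≤ v → x v = y v) (c : ℕ) :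
    homSumFrom x c n = homSumFrom y c n := by
  induction c generalizing n with
  | zero => rfl
  | succ c ih =>
    refine tsum_congr fun v => ?_
    split_ifs with hv
    · rw [h v hv, ih fun w hw => h w (hv.trans hw)]
    · rfl

lemma homSumFrom_indicator_singleton (x : ℕ → ℝ≥0∞) (m c : ℕ) :
    homSumFrom (({m} : Set ℕ).indicator x) c m = x m ^ c := by
  induction c with
  | zero => simp
  | succ c ih =>
    rw [homSumFrom_succ, tsum_eq_single m fun v hv => by simp [hv], if_pos le_rfl, ih]
    simp [pow_succ']

-- Coefficientwise form of `H(y + z) = H(y) H(z)` for the generating functions `H`.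
lemma homSumFrom_add {m n : ℕ} (hy : ∀ v, m ≤ v → y v = 0) (hz : ∀ v < m, z v = 0)
    (hn : n ≤ m) (c : ℕ) :
    homSumFrom (y + z) c n = ∑ a ∈ range (c + 1), homSumFrom y a n * homSumFrom z (c - a) m := by
  induction c generalizing n with
  | zero => simp
  | succ c ih =>
    have hyz : ∀ v, m ≤ v → homSumFrom (y + z) c v = homSumFrom z c v := fun v hv =>
      homSumFrom_congr (fun w hw => by simp [hy w (hv.trans hw)]) c
    have hlow : ∀ v, (if n ≤ v then y v * homSumFrom (y + z) c v else 0) =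
        ∑ a ∈ range (c + 1),
          (if n ≤ v then y v * homSumFrom y a v else 0) * homSumFrom z (c - a) m := by
      intro v
      by_cases hnv : n ≤ v
      · by_cases hvm : v < m
        · simp only [if_pos hnv, ih hvm.le, mul_sum, mul_assoc]
        · simp [hnv, hy v (not_lt.1 hvm)]
      · simp [hnv]
    have hhigh : ∀ v, (if n ≤ v then z v * homSumFrom (y + z) c v else 0) =
        if m ≤ v then z v * homSumFrom z c v else 0 := by
      intro v
      by_cases hvm : m ≤ v
      · rw [if_pos (hn.trans hvm), if_pos hvm, hyz v hvm]
      · simp [hvm, hz v (not_le.1 hvm)]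
    calc homSumFrom (y + z) (c + 1) n
        = ∑' v, ((if n ≤ v then y v * homSumFrom (y + z) c v else 0) +
            if n ≤ v then z v * homSumFrom (y + z) c v else 0) := by
          refine tsum_congr fun v => ?_
          split_ifs <;> simp [add_mul]
      _ = ∑ a ∈ range (c + 1), homSumFrom y (a + 1) n * homSumFrom z (c - a) m +
            homSumFrom z (c + 1) m := by
          rw [ENNReal.tsum_add, tsum_congr hlow, tsum_congr hhigh,
            Summable.tsum_finsetSum fun _ _ => ENNReal.summable]
          simp only [ENNReal.tsum_mul_right, homSumFrom_succ]
      _ = ∑ a ∈ range (c + 2), homSumFrom y a n * homSumFrom z (c + 1 - a) m := by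
          rw [sum_range_succ' _ (c + 1)]
          simp

lemma homSumFrom_indicator_Iic (x : ℕ → ℝ≥0∞) {m n : ℕ} (hn : n ≤ m) (c : ℕ) :
    homSumFrom ((Set.Iic m).indicator x) c n =
      ∑ a ∈ range (c + 1), homSumFrom ((Set.Iio m).indicator x) a n * x m ^ (c - a) := by
  have hIic : (Set.Iic m).indicator x = (Set.Iio m).indicator x + ({m} : Set ℕ).indicator x := by
    rw [← Set.Iio_insert, Set.insert_eq, Set.union_comm,
      Set.indicator_union_of_disjoint (by simp)]
    rfl
  rw [hIic, homSumFrom_add (z := ({m} : Set ℕ).indicator x)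
    (fun v hv => Set.indicator_of_notMem (Set.notMem_Iio.2 hv) x) (fun v hv => by simp [hv.ne]) hn]
  simp only [homSumFrom_indicator_singleton]

lemma homSumFrom_eq_sum_indicator_Iio (x : ℕ → ℝ≥0∞) {m n : ℕ} (hn : n ≤ m) (c : ℕ) :
    homSumFrom x c n =
      ∑ a ∈ range (c + 1), homSumFrom ((Set.Iio m).indicator x) a n * homSumFrom x (c - a) m := by
  conv_lhs => rw [← Set.indicator_self_add_compl (Set.Iio m) x]
  rw [homSumFrom_add (z := (Set.Iio m)ᶜ.indicator x)
    (fun v hv => Set.indicator_of_notMem (Set.notMem_Iio.2 hv) x)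
    (fun v hv => by simp [hv]) hn]
  refine sum_congr rfl fun a _ => ?_
  rw [homSumFrom_congr (x := (Set.Iio m)ᶜ.indicator x) (y := x) fun v hv => by simp [hv]]

lemma sum_homSumFrom_indicator_Iic_mul (x : ℕ → ℝ≥0∞) {m n : ℕ} (hn : n ≤ m) (s : ℕ) :
    ∑ i ∈ range s, homSumFrom ((Set.Iic m).indicator x) i n * homSumFrom x (s - 1 - i) m =
      ∑ i ∈ range s, x m ^ i * homSumFrom x (s - 1 - i) n := by
  set F : ℕ → ℕ → ℝ≥0∞ := fun a j =>
    homSumFrom ((Set.Iio m).indicator x) a n * x m ^ j * homSumFrom x (s - 1 - a - j) m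
  calc ∑ i ∈ range s, homSumFrom ((Set.Iic m).indicator x) i n * homSumFrom x (s - 1 - i) m
      = ∑ i ∈ range s, ∑ a ∈ range (i + 1), F a (i - a) := by
        refine sum_congr rfl fun i _ => ?_
        rw [homSumFrom_indicator_Iic x hn, sum_mul]
        refine sum_congr rfl fun a ha => ?_
        dsimp only [F]
        rw [show s - 1 - a - (i - a) = s - 1 - i by grind]
    _ = ∑ a ∈ range s, ∑ j ∈ range (s - a), F a j := sum_range_diag_flip s F
    _ = ∑ j ∈ range s, ∑ a ∈ range (s - j), F a j :=
        sum_comm' fun a j => by simp only [mem_range]; omega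
    _ = ∑ i ∈ range s, x m ^ i * homSumFrom x (s - 1 - i) n := by
        refine sum_congr rfl fun j hj => ?_
        rw [homSumFrom_eq_sum_indicator_Iio x hn, mul_sum,
          show s - 1 - j + 1 = s - j by grind]
        refine sum_congr rfl fun a _ => ?_
        dsimp only [F]
        rw [show s - 1 - a - j = s - 1 - j - a by omega]
        ring

end homSumFrom

lemma _root_.Fin.monotone_cons {α : Type*} [Preorder α] {n : ℕ} {a : α} {f : Fin n → α} :
    Monotone (Fin.cons a f : Fin (n + 1) → α) ↔ (∀ i, a ≤ f i) ∧ Monotone f := by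
  simpa only [monotone_iff_forall_lt] using! Fin.liftFun_cons (α := α) (· ≤ ·) (f := f) (a := a)

lemma monotone_cons_and_forall_le_iff {α : Type*} [Preorder α] {n : ℕ} {b a : α}
    {f : Fin n → α} :
    (Monotone (Fin.cons a f : Fin (n + 1) → α) ∧ ∀ i, b ≤ (Fin.cons a f : Fin (n + 1) → α) i) ↔
      b ≤ a ∧ Monotone f ∧ ∀ i, a ≤ f i := by
  simp only [Fin.monotone_cons, Fin.forall_fin_succ, Fin.cons_zero, Fin.cons_succ]
  exact ⟨fun ⟨⟨haf, hf⟩, hba, _⟩ => ⟨hba, hf, haf⟩,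
    fun ⟨hba, hf, haf⟩ => ⟨⟨haf, hf⟩, hba, fun i => hba.trans (haf i)⟩⟩

noncomputable def starSumFrom {n : ℕ} (f : Fin n → ℕ → ℝ≥0∞) (lb : ℕ) : ℝ≥0∞ :=
  ∑' m : Fin n → ℕ, if Monotone m ∧ ∀ i, lb ≤ m i then ∏ i, f i (m i) else 0

lemma starSumFrom_zero (f : Fin 0 → ℕ → ℝ≥0∞) (lb : ℕ) : starSumFrom f lb = 1 := by
  rw [starSumFrom, tsum_eq_single Fin.elim0 fun m hm => (hm (Subsingleton.elim _ _)).elim]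
  simp [Subsingleton.monotone]

lemma starSumFrom_succ {n : ℕ} (f : Fin (n + 1) → ℕ → ℝ≥0∞) (lb : ℕ) :
    starSumFrom f lb =
      ∑' a, if lb ≤ a then f 0 a * starSumFrom (fun i => f i.succ) a else 0 := by
  rw [starSumFrom, ← (Fin.consEquiv fun _ => ℕ).tsum_eq, ENNReal.tsum_prod']
  refine tsum_congr fun a => ?_
  simp only [Fin.consEquiv, Equiv.coe_fn_mk, monotone_cons_and_forall_le_iff]
  split_ifs with ha
  · rw [starSumFrom, ← ENNReal.tsum_mul_left]
    refine tsum_congr fun p => ?_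
    rw [if_congr (and_iff_right ha) rfl rfl]
    split_ifs <;> simp [Fin.prod_univ_succ]
  · simp [ha]

lemma starSumFrom_const (x : ℕ → ℝ≥0∞) (c lb : ℕ) :
    starSumFrom (fun _ : Fin c => x) lb = homSumFrom x c lb := by
  induction c generalizing lb with
  | zero => exact starSumFrom_zero _ lb
  | succ c ih => simp only [starSumFrom_succ, ih, homSumFrom_succ]

lemma starSumFrom_ite (x y : ℕ → ℝ≥0∞) {i s : ℕ} (hi : i < s) (lb : ℕ) :
    starSumFrom (fun j : Fin s => if (j : ℕ) = i then y else x) lb =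
      ∑' m, if lb ≤ m then
        homSumFrom ((Set.Iic m).indicator x) i lb * (y m * homSumFrom x (s - 1 - i) m) else 0 := by
  obtain ⟨c, rfl⟩ : ∃ c, s = c + 1 := ⟨s - 1, by omega⟩
  induction i generalizing c lb with
  | zero =>
    simp [starSumFrom_succ, starSumFrom_const]
  | succ i ih =>
    obtain ⟨c, rfl⟩ : ∃ c', c = c' + 1 := ⟨c - 1, by omega⟩
    set H : ℕ → ℕ → ℕ → ℝ≥0∞ := fun k m => homSumFrom ((Set.Iic m).indicator x) k
    set g : ℕ → ℝ≥0∞ := fun m => y m * homSumFrom x (c - i) m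
    rw [starSumFrom_succ]
    simp only [Fin.val_succ, Fin.val_zero, Nat.add_right_cancel_iff, (Nat.succ_ne_zero i).symm,
      ↓reduceIte, ih _ c (by omega), add_tsub_cancel_right, Nat.add_sub_add_right]
    calc (∑' a, if lb ≤ a then x a * ∑' m, (if a ≤ m then H i m a * g m else 0) else 0)
        = ∑' a, ∑' m, if lb ≤ a ∧ a ≤ m then x a * H i m a * g m else 0 := by
          refine tsum_congr fun a => ?_
          by_cases ha : lb ≤ a
          · simp only [ha, true_and, if_true, ← ENNReal.tsum_mul_left, mul_ite, mul_zero, mul_assoc]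
          · simp [ha]
      _ = ∑' m, ∑' a, if lb ≤ a ∧ a ≤ m then x a * H i m a * g m else 0 := ENNReal.tsum_comm
      _ = ∑' m, if lb ≤ m then H (i + 1) m lb * g m else 0 := by
          refine tsum_congr fun m => ?_
          by_cases hm : lb ≤ m
          · simp only [hm, if_true, H, homSumFrom_succ, ← ENNReal.tsum_mul_right]
            refine tsum_congr fun a => ?_
            by_cases ha : a ≤ m <;> simp [ha, mul_assoc]
          · simp only [hm, if_false]
            exact ENNReal.tsum_eq_zero.2 fun a => if_neg fun h => hm (h.1.trans h.2)

theorem sum_tsum_pow_mul_mul_homSumFrom_eq_sum_starSumFrom (x y : ℕ → ℝ≥0∞) (s : ℕ) :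
    ∑ i ∈ range s, (∑' m, x m ^ i * y m) * homSumFrom x (s - 1 - i) 0 =
      ∑ i ∈ range s, starSumFrom (fun j : Fin s => if (j : ℕ) = i then y else x) 0 := by
  calc ∑ i ∈ range s, (∑' m, x m ^ i * y m) * homSumFrom x (s - 1 - i) 0
      = ∑' m, (∑ i ∈ range s, x m ^ i * homSumFrom x (s - 1 - i) 0) * y m := by
        simp only [← ENNReal.tsum_mul_right, sum_mul]
        rw [← Summable.tsum_finsetSum fun _ _ => ENNReal.summable]
        exact tsum_congr fun m => sum_congr rfl fun i _ => by ring
    _ = ∑' m, (∑ i ∈ range s,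
          homSumFrom ((Set.Iic m).indicator x) i 0 * homSumFrom x (s - 1 - i) m) * y m := by
        simp only [sum_homSumFrom_indicator_Iic_mul x (Nat.zero_le _)]
    _ = ∑ i ∈ range s, ∑' m,
          homSumFrom ((Set.Iic m).indicator x) i 0 * (y m * homSumFrom x (s - 1 - i) m) := by
        rw [← Summable.tsum_finsetSum fun _ _ => ENNReal.summable]
        exact tsum_congr fun m => by rw [sum_mul]; exact sum_congr rfl fun i _ => by ring
    _ = ∑ i ∈ range s, starSumFrom (fun j : Fin s => if (j : ℕ) = i then y else x) 0 :=
        sum_congr rfl fun i hi => by simp [starSumFrom_ite x y (mem_range.1 hi)]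

noncomputable def invSuccPow (k m : ℕ) : ℝ≥0∞ := ((m + 1 : ℝ≥0∞)⁻¹) ^ k

lemma invSuccPow_ne_top (k m : ℕ) : invSuccPow k m ≠ ⊤ := by
  simp [invSuccPow]

lemma invSuccPow_toReal (k m : ℕ) : (invSuccPow k m).toReal = 1 / ((m : ℝ) + 1) ^ k := by
  rw [invSuccPow, ENNReal.toReal_pow, ENNReal.toReal_inv, ← Nat.cast_succ, ENNReal.toReal_natCast]
  simp

lemma invSuccPow_pow_mul (k l i m : ℕ) :
    invSuccPow k m ^ i * invSuccPow l m = invSuccPow (k * i + l) m := by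
  simp only [invSuccPow, pow_add, pow_mul]

lemma tsum_invSuccPow {k : ℕ} (hk : 1 < k) :
    ∑' m, invSuccPow k m = ENNReal.ofReal (∑' m : ℕ, 1 / ((m : ℝ) + 1) ^ k) := by
  have hsum : Summable fun m : ℕ => 1 / ((m : ℝ) + 1) ^ k := by
    simpa using (summable_nat_add_iff 1).2 (Real.summable_one_div_nat_pow.2 hk)
  rw [ENNReal.ofReal_tsum_of_nonneg (fun _ => by positivity) hsum]
  exact tsum_congr fun m => by
    rw [← invSuccPow_toReal, ENNReal.ofReal_toReal (invSuccPow_ne_top k m)]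

lemma tsum_invSuccPow_ne_top {k : ℕ} (hk : 1 < k) : ∑' m, invSuccPow k m ≠ ⊤ := by
  rw [tsum_invSuccPow hk]
  exact ENNReal.ofReal_ne_top

lemma riemannZeta_natCast_eq {k : ℕ} (hk : 1 < k) :
    riemannZeta k = ((∑' m, invSuccPow k m).toReal : ℂ) := by
  rw [tsum_invSuccPow hk, ENNReal.toReal_ofReal (tsum_nonneg fun _ => by positivity),
    zeta_eq_tsum_one_div_nat_add_one_cpow (by simpa using hk), Complex.ofReal_tsum]
  push_cast
  simp [Complex.cpow_natCast]

lemma zetaStar_eq_toReal_starSumFrom {n : ℕ} (k : Fin n → ℕ) :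
    zetaStar k = (starSumFrom (fun i => invSuccPow (k i)) 0).toReal := by
  rw [starSumFrom, ENNReal.tsum_toReal_eq fun m => by
    split_ifs
    exacts [ENNReal.prod_ne_top fun i _ => invSuccPow_ne_top _ _, ENNReal.zero_ne_top]]
  refine tsum_congr fun m => ?_
  split_ifs <;> simp_all [ENNReal.toReal_prod, invSuccPow_toReal]

end MultipleZetaStar

open MultipleZetaStar

theorem stmt12_general (s t : ℕ) (ht : 2 ≤ t) :
    ∑ i ∈ Finset.range s,
        riemannZeta (2 * i + t) * ((zetaStar (fun _ : Fin (s - 1 - i) => 2) : ℝ) : ℂ)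
    = ∑ i ∈ Finset.range s,
        ((zetaStar (fun j : Fin s => if (j : ℕ) = i then t else 2) : ℝ) : ℂ) := by
  have key := sum_tsum_pow_mul_mul_homSumFrom_eq_sum_starSumFrom (invSuccPow 2) (invSuccPow t) s
  simp only [invSuccPow_pow_mul] at key
  have hL : ∀ i ∈ range s,
      (∑' m, invSuccPow (2 * i + t) m) * homSumFrom (invSuccPow 2) (s - 1 - i) 0 ≠ ⊤ :=
    fun i _ => ENNReal.mul_ne_top (tsum_invSuccPow_ne_top (by omega))
      (homSumFrom_ne_top (tsum_invSuccPow_ne_top one_lt_two) _ _)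
  have hR := ENNReal.sum_ne_top.1 (key ▸ ENNReal.sum_ne_top.2 hL)
  have hzeta : ∀ i : ℕ,
      riemannZeta (2 * i + t) * ((zetaStar (fun _ : Fin (s - 1 - i) => 2) : ℝ) : ℂ) =
        (((∑' m, invSuccPow (2 * i + t) m) * homSumFrom (invSuccPow 2) (s - 1 - i) 0).toReal :
          ℂ) := by
    intro i
    rw [show (2 * i + t : ℂ) = ((2 * i + t : ℕ) : ℂ) by push_cast; ring,
      riemannZeta_natCast_eq (by omega), zetaStar_eq_toReal_starSumFrom, starSumFrom_const,
      ENNReal.toReal_mul, Complex.ofReal_mul]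
  have hstar : ∀ i : ℕ, zetaStar (fun j : Fin s => if (j : ℕ) = i then t else 2) =
      (starSumFrom (fun j : Fin s => if (j : ℕ) = i then invSuccPow t else invSuccPow 2)
        0).toReal := by
    intro i
    simp only [zetaStar_eq_toReal_starSumFrom, apply_ite invSuccPow]
  simp only [hzeta, hstar, ← Complex.ofReal_sum, ← ENNReal.toReal_sum hL,
    ← ENNReal.toReal_sum hR, key]

theorem stmt12 (s t : ℕ) (hs : 1 ≤ s) (ht : 2 ≤ t) :
    ∑ i ∈ Finset.range s,
        riemannZeta (2 * i + t) * ((zetaStar (fun _ : Fin (s - 1 - i) => 2) : ℝ) : ℂ)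
    = ∑ i ∈ Finset.range s,
        ((zetaStar (fun j : Fin s => if (j : ℕ) = i then t else 2) : ℝ) : ℂ) :=
  stmt12_general s t ht
end

section
/- For every integer s ≥ 1, Σ_{i=2}^{s+1} C(2(s+1), 2i) B_{2(s+1-i)} B_{2i} (1 - 2^{1-2i}) = [1 - (2s+1)(1 - 2^{1-2(s+1)})] B_{2(s+1)} - ((s+1)(2s+1)/12) B_{2s}. -/
/-!
Let `𝔅 = t / (eᵗ - 1)` and let `𝔊 = 𝔅(t) - 2𝔅(t/2) = -t e^{t/2} / (eᵗ - 1)` be the exponential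
generating function of `(1 - 2^{1-k}) B_k`. Differentiating `𝔅 (eᵗ - 1) = t` gives Euler's relation
`𝔅 - t𝔅' = 𝔅² eᵗ`, and from it `(𝔅 + t/2) 𝔊 = 𝔊 - t𝔊'`. Comparing coefficients of `t^{2n}`, the odd
terms drop out because `𝔊` is even, and
`∑ᵢ C(2n, 2i) B_{2n-2i} B_{2i} (1 - 2^{1-2i}) = (1 - 2n)(1 - 2^{1-2n}) B_{2n}`.
The theorem is the case `n = s + 1` with the terms `i = 0, 1` moved to the right-hand side.
-/

open PowerSeries Finset Nat

theorem PowerSeries.derivative_rescale {R : Type*} [CommSemiring R] (a : R) (f : R⟦X⟧) :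
    d⁄dX R (rescale a f) = C a * rescale a (d⁄dX R f) := by
  ext n
  simp only [coeff_derivative, coeff_rescale, coeff_C_mul, pow_succ]
  ring

theorem Finset.sum_range_two_mul_add_one_eq_of_odd {M : Type*} [AddCommMonoid M] (f : ℕ → M)
    (hf : ∀ k, Odd k → f k = 0) (n : ℕ) :
    ∑ k ∈ range (2 * n + 1), f k = ∑ i ∈ range (n + 1), f (2 * i) := by
  induction n with
  | zero => simp
  | succ n ih =>
    rw [show 2 * (n + 1) + 1 = 2 * n + 1 + 1 + 1 by ring, sum_range_succ, sum_range_succ, ih,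
      hf _ (odd_two_mul_add_one n), add_zero, sum_range_succ (n := n + 1), mul_add_one]

theorem PowerSeries.coeff_mul_mk_div_factorial (a b : ℕ → ℚ) (m : ℕ) :
    coeff m ((mk fun k ↦ a k / k !) * mk fun k ↦ b k / k !) * m ! =
      ∑ k ∈ range (m + 1), (m.choose k : ℚ) * a k * b (m - k) := by
  rw [coeff_mul, Nat.sum_antidiagonal_eq_sum_range_succ_mk, sum_mul]
  refine sum_congr rfl fun k hk ↦ ?_
  rw [Nat.cast_choose ℚ (Nat.lt_succ_iff.mp (mem_range.mp hk))]
  simp only [coeff_mk]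
  field_simp

namespace Bernoulli

local notation "𝔅" => bernoulliPowerSeries ℚ

theorem bernoulliPowerSeries_eq_mk : 𝔅 = mk fun k ↦ bernoulli k / k ! := by
  simp [bernoulliPowerSeries]

theorem exp_sub_one_ne_zero : exp ℚ - 1 ≠ 0 :=
  right_ne_zero_of_mul (bernoulliPowerSeries_mul_exp_sub_one ℚ ▸ X_ne_zero)

theorem two_mul_C_inv_two : (2 : ℚ⟦X⟧) * C 2⁻¹ = 1 := by
  rw [show (2 : ℚ⟦X⟧) = C 2 from rfl, ← map_mul]; norm_num

theorem bernoulliPowerSeries_sub_X_mul_derivative :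
    𝔅 - X * d⁄dX ℚ 𝔅 = 𝔅 ^ 2 * exp ℚ := by
  have h := bernoulliPowerSeries_mul_exp_sub_one ℚ
  have hd := congrArg (d⁄dX ℚ) h
  simp only [Derivation.leibniz, map_sub, derivative_exp, Derivation.map_one_eq_zero,
    derivative_X, smul_eq_mul] at hd
  apply mul_right_cancel₀ exp_sub_one_ne_zero
  linear_combination (1 - 𝔅 * exp ℚ) * h - X * hd

/-- `halfBernoulli k = -B_k(1/2)`, the value of the Bernoulli polynomial at `1/2` up to sign. -/
def halfBernoulli (k : ℕ) : ℚ := (1 - 2 ^ (1 - k : ℤ)) * bernoulli k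

theorem halfBernoulli_eq_zero_of_odd {k : ℕ} (hk : Odd k) : halfBernoulli k = 0 := by
  rcases eq_or_ne k 1 with rfl | hk1
  · simp [halfBernoulli]
  · simp [halfBernoulli, bernoulli_eq_zero_of_odd hk (by grind)]

def halfBernoulliPowerSeries : ℚ⟦X⟧ := mk fun k ↦ halfBernoulli k / k !

local notation "𝔊" => halfBernoulliPowerSeries

theorem halfBernoulliPowerSeries_eq_sub_rescale :
    𝔊 = 𝔅 - 2 * rescale 2⁻¹ 𝔅 := by
  ext k
  have h2 : (2 : ℚ⟦X⟧) = C 2 := rfl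
  simp only [halfBernoulliPowerSeries, bernoulliPowerSeries_eq_mk, halfBernoulli, coeff_mk,
    map_sub, h2, coeff_C_mul, coeff_rescale]
  rw [zpow_sub₀ (two_ne_zero' ℚ), zpow_one, zpow_natCast, inv_pow]
  field_simp

theorem halfBernoulliPowerSeries_eq :
    𝔊 = -(𝔅 * rescale 2⁻¹ (exp ℚ)) := by
  have h := bernoulliPowerSeries_mul_exp_sub_one ℚ
  have hh := congrArg (rescale (2⁻¹ : ℚ)) h
  simp only [map_mul, map_sub, map_one, rescale_X] at hh
  have hsq : rescale (2⁻¹ : ℚ) (exp ℚ) ^ 2 = exp ℚ := by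
    rw [sq, exp_mul_exp_eq_exp_add]; norm_num
  have hne : rescale (2⁻¹ : ℚ) (exp ℚ) - 1 ≠ 0 :=
    right_ne_zero_of_mul (hh ▸ mul_ne_zero (by simp) X_ne_zero)
  rw [halfBernoulliPowerSeries_eq_sub_rescale]
  apply mul_right_cancel₀ hne
  linear_combination h - 2 * hh + 𝔅 * hsq - X * two_mul_C_inv_two

theorem halfBernoulliPowerSeries_differential_equation :
    (𝔅 + C 2⁻¹ * X) * 𝔊 = 𝔊 - X * d⁄dX ℚ 𝔊 := by
  have h := bernoulliPowerSeries_mul_exp_sub_one ℚ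
  have hD := bernoulliPowerSeries_sub_X_mul_derivative
  rw [halfBernoulliPowerSeries_eq]
  simp only [map_neg, Derivation.leibniz, derivative_rescale, derivative_exp, smul_eq_mul]
  linear_combination rescale 2⁻¹ (exp ℚ) * hD + 𝔅 * rescale 2⁻¹ (exp ℚ) * h
    - X * 𝔅 * rescale 2⁻¹ (exp ℚ) * two_mul_C_inv_two

theorem sum_choose_mul_halfBernoulli_mul_bernoulli (m : ℕ) :
    ∑ k ∈ range (m + 1), (m.choose k : ℚ) * halfBernoulli k * bernoulli (m - k)
      + m / 2 * halfBernoulli (m - 1) = (1 - m) * halfBernoulli m := by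
  have h := congrArg (fun f : ℚ⟦X⟧ ↦ coeff m f * (m ! : ℚ))
    halfBernoulliPowerSeries_differential_equation
  simp only [add_mul, mul_comm 𝔅, map_add, map_sub, mul_assoc, coeff_C_mul] at h
  rw [halfBernoulliPowerSeries, bernoulliPowerSeries_eq_mk, coeff_mul_mk_div_factorial] at h
  cases m with
  | zero => simp
  | succ j =>
    simp only [coeff_succ_X_mul, coeff_derivative, coeff_mk, factorial_succ] at h
    push_cast at h ⊢
    field_simp at h
    linear_combination h / 2

theorem sum_range_choose_two_mul_mul_bernoulli_mul_bernoulli (n : ℕ) :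
    ∑ i ∈ range (n + 1), (choose (2 * n) (2 * i) : ℚ) * bernoulli (2 * (n - i))
        * bernoulli (2 * i) * (1 - (2 : ℚ) ^ ((1 : ℤ) - 2 * i))
      = (1 - 2 * n) * (1 - (2 : ℚ) ^ ((1 : ℤ) - 2 * n)) * bernoulli (2 * n) := by
  have h := sum_choose_mul_halfBernoulli_mul_bernoulli (2 * n)
  have hcorr : ((2 * n : ℕ) : ℚ) / 2 * halfBernoulli (2 * n - 1) = 0 := by
    cases n with
    | zero => simp
    | succ j => rw [halfBernoulli_eq_zero_of_odd ⟨j, by omega⟩, mul_zero]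
  rw [hcorr, add_zero, sum_range_two_mul_add_one_eq_of_odd _
    (fun k hk ↦ by rw [halfBernoulli_eq_zero_of_odd hk, mul_zero, zero_mul])] at h
  simp_rw [← mul_tsub] at h
  simpa [halfBernoulli, mul_comm, mul_left_comm, mul_assoc] using h

end Bernoulli

open Bernoulli in
theorem stmt14_general (s : ℕ) :
    ∑ i ∈ Finset.Icc 2 (s + 1),
        (Nat.choose (2 * (s + 1)) (2 * i) : ℚ) * bernoulli (2 * (s + 1 - i))
          * bernoulli (2 * i) * (1 - (2 : ℚ) ^ ((1 : ℤ) - 2 * i))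
    = (1 - (2 * s + 1) * (1 - (2 : ℚ) ^ ((1 : ℤ) - 2 * (s + 1)))) * bernoulli (2 * (s + 1))
      - ((s + 1) * (2 * s + 1) / 12) * bernoulli (2 * s) := by
  have h := sum_range_choose_two_mul_mul_bernoulli_mul_bernoulli (s + 1)
  rw [range_eq_Ico, sum_eq_sum_Ico_succ_bot (by omega), sum_eq_sum_Ico_succ_bot (by omega),
    Ico_add_one_right_eq_Icc] at h
  have hchoose : ((2 * (s + 1)).choose 2 : ℚ) = (s + 1) * (2 * s + 1) := by
    rw [Nat.cast_choose_two]; push_cast; ring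
  norm_num [hchoose] at h
  linear_combination h

theorem stmt14 (s : ℕ) (hs : 1 ≤ s) :
    ∑ i ∈ Finset.Icc 2 (s + 1),
        (Nat.choose (2 * (s + 1)) (2 * i) : ℚ) * bernoulli (2 * (s + 1 - i))
          * bernoulli (2 * i) * (1 - (2 : ℚ) ^ ((1 : ℤ) - 2 * i))
    = (1 - (2 * s + 1) * (1 - (2 : ℚ) ^ ((1 : ℤ) - 2 * (s + 1)))) * bernoulli (2 * (s + 1))
      - ((s + 1) * (2 * s + 1) / 12) * bernoulli (2 * s) :=
  stmt14_general s
end
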